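/- Let (P_n) be a partition of ℕ into nonempty finite sets and (θ_n) submeasures determining a generalized density ideal 𝒵_θ = {A ⊆ ℕ : θ_n(A) → 0 as n → ∞}. If 𝒵_θ is not a trivial modification of Fin, i.e., there is no X ⊆ ℕ such that 𝒵_θ = {A ⊆ ℕ : A ∩ X is finite}, then 𝒵_θ is not F_σ. -/
import Mathlib


open Filter Topology

open Classical in
/-- The characteristic function of a set of naturals, as an element of the Cantor space. -/
noncomputable def chi (A : Set ℕ) : ℕ → Bool := fun n => decide (n ∈ A)

/-- A set in the Cantor space is F_σ if it is a countable union of closed sets. -/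
def IsFsigma (S : Set (ℕ → Bool)) : Prop :=
  ∃ C : ℕ → Set (ℕ → Bool), (∀ n, IsClosed (C n)) ∧ S = ⋃ n, C n


lemma freq_of_not_tendsto {g : ℕ → ℝ} (h0 : ∀ n, 0 ≤ g n)
    (h : ¬ Tendsto g atTop (𝓝 0)) : ∃ ε > 0, ∀ N, ∃ n ≥ N, ε ≤ g n := by
  by_contra hc
  push_neg at hc
  apply h
  rw [Metric.tendsto_atTop]
  intro ε hε
  obtain ⟨N, hN⟩ := hc ε hε
  exact ⟨N, fun n hn => by
    rw [Real.dist_eq, sub_zero, abs_of_nonneg (h0 n)]; exact hN n hn⟩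

lemma exists_mid (θ : Set ℕ → ℝ)
    (hmono : ∀ A B : Set ℕ, A ⊆ B → θ A ≤ θ B)
    (hsub : ∀ A B : Set ℕ, θ (A ∪ B) ≤ θ A + θ B) (hempty : θ ∅ = 0)
    (δ τ : ℝ) (hτ : 0 < τ) :
    ∀ F : Finset ℕ, (∀ k ∈ F, θ {k} < δ) → τ ≤ θ ↑F →
    ∃ E : Finset ℕ, E ⊆ F ∧ τ ≤ θ ↑E ∧ θ ↑E < τ + δ := by
  intro F
  induction F using Finset.induction_on with
  | empty => intro _ hF; rw [Finset.coe_empty, hempty] at hF; linarith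
  | @insert a F' ha ih =>
    intro hsing hF
    by_cases hc : τ ≤ θ ↑F'
    · obtain ⟨E, h1, h2, h3⟩ := ih (fun k hk => hsing k (Finset.mem_insert_of_mem hk)) hc
      exact ⟨E, h1.trans (Finset.subset_insert a F'), h2, h3⟩
    · push_neg at hc
      refine ⟨insert a F', Finset.Subset.refl _, hF, ?_⟩
      have h1 : θ ↑(insert a F') ≤ θ {a} + θ ↑F' := by
        rw [Finset.coe_insert, Set.insert_eq]
        exact hsub _ _
      have h2 : θ {a} < δ := hsing a (Finset.mem_insert_self a F')
      linarith

def iterPick (p : ℕ → ℕ → ℕ) (J : ℕ → ℕ) : ℕ → ℕ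
  | 0 => p (J 0) 0
  | (i+1) => p (J (i+1)) (iterPick p J i + 1)

lemma chi_inj : Function.Injective chi := by
  intro A B h
  ext m
  have := congrFun h m
  simpa [chi, decide_eq_decide] using this

lemma chi_mem_iff' {A : Set ℕ} {m : ℕ} (h : m ∈ A) : chi A m = true := by
  simp [chi, h]

lemma chi_notMem_iff' {A : Set ℕ} {m : ℕ} (h : m ∉ A) : chi A m = false := by
  simp [chi, h]

lemma unpair_fiber_infinite (j : ℕ) : {i : ℕ | (Nat.unpair i).1 = j}.Infinite := by
  apply Set.infinite_of_injective_forall_mem (f := fun m : ℕ => Nat.pair j m)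
  case hi =>
    intro a b h
    have := congrArg Nat.unpair h
    simpa [Nat.unpair_pair] using this
  case hf =>
    intro m
    simp [Nat.unpair_pair]


lemma not_fsigma_colFin (J : ℕ → ℕ) (hJ : ∀ j : ℕ, {i | J i = j}.Infinite) :
    ¬ IsFsigma {f : ℕ → Bool | ∀ j, {i | f i = true ∧ J i = j}.Finite} := by
  classical
  set T := {f : ℕ → Bool | ∀ j, {i | f i = true ∧ J i = j}.Finite} with hT
  rintro ⟨C, hCcl, hCeq⟩
  have hCsub : ∀ k, C k ⊆ T := by
    intro k
    rw [hCeq]; exact Set.subset_iUnion C k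
  -- sublemma
  have sub : ∀ (k m : ℕ) (g : ℕ → Bool), ∃ (m' : ℕ) (g' : ℕ → Bool),
      m < m' ∧ (∀ i, i < m → g' i = g i) ∧
      (∀ i, m ≤ i → g' i = true → J i = k ∧ i < m') ∧
      (∀ h : ℕ → Bool, (∀ i, i < m' → h i = g' i) → h ∉ C k) := by
    intro k m g
    by_contra hcon
    push_neg at hcon
    have key : ∀ r : ℕ, ∃ h : ℕ → Bool,
        (∀ i, i < m + r + 1 → h i =
          (if i < m then g i else decide (J i = k ∧ i < m + r + 1))) ∧ h ∈ C k := by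
      intro r
      have h1 : m < m + r + 1 := by omega
      have h2 : ∀ i, i < m →
          (if i < m then g i else decide (J i = k ∧ i < m + r + 1)) = g i := by
        intro i hi; simp [hi]
      have h3 : ∀ i, m ≤ i →
          (if i < m then g i else decide (J i = k ∧ i < m + r + 1)) = true →
          J i = k ∧ i < m + r + 1 := by
        intro i hi hval
        rw [if_neg (by omega)] at hval
        exact of_decide_eq_true hval
      exact hcon (m + r + 1) _ h1 h2 h3
    choose hseq hspec1 hspec2 using key
    set hstar : ℕ → Bool := fun i => if i < m then g i else decide (J i = k) with hsdef
    have htends : Tendsto hseq atTop (𝓝 hstar) := by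
      rw [tendsto_pi_nhds]
      intro i
      apply tendsto_const_nhds.congr'
      filter_upwards [eventually_ge_atTop i] with r hr
      have hi : i < m + r + 1 := by omega
      rw [hspec1 r i hi]
      by_cases hc : i < m
      · simp [hsdef, hc]
      · simp only [hsdef, if_neg hc]
        by_cases hJi : J i = k
        · simp [hJi, hi]
        · simp [hJi]
    have hmem : hstar ∈ C k := (hCcl k).mem_of_tendsto htends (Eventually.of_forall hspec2)
    have hnotT : hstar ∉ T := by
      intro hmemT
      have hfin := hmemT k
      have hinf : {i | hstar i = true ∧ J i = k}.Infinite := by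
        apply Set.Infinite.mono (s := {i | J i = k} \ Set.Iio m)
        · intro i hi
          obtain ⟨hik, him⟩ := hi
          simp only [Set.mem_Iio, not_lt] at him
          have hik' : J i = k := hik
          refine ⟨?_, hik'⟩
          simp [hsdef, Nat.not_lt.mpr him, hik']
        · exact ((hJ k).diff (Set.finite_Iio m))
      exact hinf hfin
    exact hnotT (hCsub k hmem)
  choose M G hlt hagree hsupp hout using sub
  -- recursion
  set stage : ℕ → ℕ × (ℕ → Bool) := fun k =>
    Nat.rec (0, fun _ => false)
      (fun k p => (M k p.1 p.2, G k p.1 p.2)) k with hstage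
  have hstage0 : stage 0 = (0, fun _ => false) := rfl
  have hstageS : ∀ k, stage (k+1) = (M k (stage k).1 (stage k).2, G k (stage k).1 (stage k).2) :=
    fun k => rfl
  set mm : ℕ → ℕ := fun k => (stage k).1 with hmm
  set gg : ℕ → (ℕ → Bool) := fun k => (stage k).2 with hgg
  have hmm0 : mm 0 = 0 := rfl
  have hmlt : ∀ k, mm k < mm (k+1) := fun k => hlt k (mm k) (gg k)
  have hmono : StrictMono mm := strictMono_nat_of_lt_succ hmlt
  have hmk : ∀ k, k ≤ mm k := fun k => hmono.le_apply
  -- agreement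
  have hag1 : ∀ k, ∀ i, i < mm k → gg (k+1) i = gg k i := fun k => hagree k (mm k) (gg k)
  have hagree2 : ∀ k k', k ≤ k' → ∀ i, i < mm k → gg k' i = gg k i := by
    intro k k' hkk'
    induction k' with
    | zero =>
      intro i hi
      exact (Nat.not_lt_zero i (by rwa [Nat.le_zero.mp hkk', hmm0] at hi)).elim
    | succ k' ih =>
      intro i hi
      rcases Nat.eq_or_lt_of_le hkk' with h | h
      · rw [h]
      · have hk' : k ≤ k' := by omega
        rw [hag1 k' i (lt_of_lt_of_le hi (hmono.le_iff_le.mpr hk'))]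
        exact ih hk' i hi
  set gstar : ℕ → Bool := fun i => gg (i+1) i with hgstar
  have hgs : ∀ k i, i < mm k → gstar i = gg k i := by
    intro k i hi
    rcases le_total (i+1) k with h | h
    · exact (hagree2 (i+1) k h i (lt_of_lt_of_le (Nat.lt_succ_self i) (hmk (i+1)))).symm
    · exact hagree2 k (i+1) h i hi
  -- gstar not in any C k
  have hnot : ∀ k, gstar ∉ C k := by
    intro k
    apply hout k (mm k) (gg k)
    intro i hi
    exact hgs (k+1) i hi
  -- gstar in T
  have hmemT : gstar ∈ T := by
    intro j
    have hex : ∀ i : ℕ, ∃ k, mm k ≤ i ∧ i < mm (k+1) := by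
      intro i
      induction i with
      | zero => exact ⟨0, by rw [hmm0], by have := hmlt 0; rw [hmm0] at this; omega⟩
      | succ i ih =>
        obtain ⟨k, h1, h2⟩ := ih
        by_cases hc : i + 1 < mm (k+1)
        · exact ⟨k, by omega, hc⟩
        · exact ⟨k+1, by omega, by have := hmlt (k+1); omega⟩
    apply Set.Finite.subset (Set.finite_Iio (mm (j+1)))
    rintro i ⟨hit, hij⟩
    obtain ⟨k, h1, h2⟩ := hex i
    have hval : gg (k+1) i = true := by rw [← hgs (k+1) i h2]; exact hit
    have := hsupp k (mm k) (gg k) i h1 hval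
    have hkj : k = j := by rw [← hij, this.1]
    subst hkj
    exact Set.mem_Iio.mpr this.2
  rw [hCeq] at hmemT
  obtain ⟨_, ⟨k, rfl⟩, hk⟩ := hmemT
  exact hnot k hk


theorem stmt0
    (P : ℕ → Finset ℕ) (hPne : ∀ n, (P n).Nonempty)
    (hPdisj : ∀ m n, m ≠ n → Disjoint (P m) (P n))
    (hPcov : ∀ k, ∃ n, k ∈ P n)
    (θ : ℕ → Set ℕ → ℝ)
    (hθnonneg : ∀ n A, 0 ≤ θ n A)
    (hθempty : ∀ n, θ n ∅ = 0)
    (hθmono : ∀ n A B, A ⊆ B → θ n A ≤ θ n B)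
    (hθsub : ∀ n A B, θ n (A ∪ B) ≤ θ n A + θ n B)
    (hθloc : ∀ n A, θ n A = θ n (A ∩ ↑(P n)))
    (Z : Set (Set ℕ))
    (hZ : Z = {A : Set ℕ | Tendsto (fun n => θ n A) atTop (𝓝 0)})
    (hnontriv : ¬ ∃ X : Set ℕ, Z = {A : Set ℕ | (A ∩ X).Finite}) :
    ¬ IsFsigma (chi '' Z) := by
  classical
  choose bl hbl using hPcov
  have hbl_unique : ∀ k n, k ∈ P n → n = bl k := by
    intro k n hk
    by_contra hne
    exact Finset.disjoint_left.mp (hPdisj n (bl k) hne) hk (hbl k)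
  set δ : ℕ → ℝ := fun j => ((j : ℝ) + 1)⁻¹ with hδ
  have hδpos : ∀ j, 0 < δ j := fun j => by positivity
  set Sd : ℕ → ℕ → Finset ℕ := fun n j => (P n).filter (fun k => θ n {k} < δ j) with hSd
  have hSA : ∀ j : ℕ, ¬ Tendsto (fun n => θ n ↑(Sd n j)) atTop (𝓝 0) := by
    intro j htt
    apply hnontriv
    refine ⟨{k | δ j ≤ θ (bl k) {k}}, ?_⟩
    set X := {k | δ j ≤ θ (bl k) {k}} with hX
    rw [hZ]
    ext A
    simp only [Set.mem_setOf_eq]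
    constructor
    · intro hA
      by_contra hinf
      have hinf : (A ∩ X).Infinite := hinf
      have himg : (bl '' (A ∩ X)).Infinite := by
        intro hfin
        apply hinf
        have hsub : (A ∩ X) ⊆ ⋃ n ∈ bl '' (A ∩ X), (↑(P n) : Set ℕ) := by
          intro k hk
          exact Set.mem_biUnion (Set.mem_image_of_mem bl hk) (hbl k)
        exact Set.Finite.subset (hfin.biUnion fun n _ => (P n).finite_toSet) hsub
      have hev : ∀ᶠ n in atTop, θ n A < δ j := hA.eventually_lt_const (hδpos j)
      rw [eventually_atTop] at hev
      obtain ⟨N, hN⟩ := hev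
      obtain ⟨n, hn_mem, hn_gt⟩ := himg.exists_gt N
      obtain ⟨k, hk, rfl⟩ := hn_mem
      have h1 : δ j ≤ θ (bl k) {k} := hk.2
      have h2 : θ (bl k) {k} ≤ θ (bl k) A := hθmono _ _ _ (Set.singleton_subset_iff.mpr hk.1)
      have := hN (bl k) (le_of_lt hn_gt)
      linarith
    · intro hfin
      apply squeeze_zero' (Eventually.of_forall fun n => hθnonneg n A) _ htt
      obtain ⟨B, hB⟩ := (hfin.image bl).bddAbove
      rw [eventually_atTop]
      refine ⟨B + 1, fun n hn => ?_⟩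
      rw [hθloc n A]
      apply hθmono
      intro k hk
      obtain ⟨hkA, hkP⟩ := hk
      have hbk : bl k = n := (hbl_unique k n hkP).symm
      have hkX : k ∉ X := by
        intro hkX
        have : bl k ≤ B := hB (Set.mem_image_of_mem bl ⟨hkA, hkX⟩)
        omega
      rw [hX, Set.mem_setOf_eq, not_le] at hkX
      simp only [hSd, Finset.coe_filter, Set.mem_setOf_eq]
      exact ⟨hkP, by rwa [hbk] at hkX⟩
  have hfreq : ∀ j : ℕ, ∃ ε > 0, ∀ N, ∃ n ≥ N, ε ≤ θ n ↑(Sd n j) :=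
    fun j => freq_of_not_tendsto (fun n => hθnonneg n _) (hSA j)
  choose ε hεpos hεfreq using hfreq
  set τ : ℕ → ℝ := fun j => min (ε j) (δ j) with hτ
  have hτpos : ∀ j, 0 < τ j := fun j => lt_min (hεpos j) (hδpos j)
  have hpick : ∀ j N, ∃ n, N ≤ n ∧ ε j ≤ θ n ↑(Sd n j) := by
    intro j N
    obtain ⟨n, h1, h2⟩ := hεfreq j N
    exact ⟨n, h1, h2⟩
  choose pick hp1 hp2 using hpick
  set J : ℕ → ℕ := fun i => (Nat.unpair i).1 with hJ
  set nn : ℕ → ℕ := iterPick pick J with hnn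
  have hnn0 : nn 0 = pick (J 0) 0 := rfl
  have hnnS : ∀ i, nn (i+1) = pick (J (i+1)) (nn i + 1) := fun i => rfl
  have hnnmono : StrictMono nn := by
    apply strictMono_nat_of_lt_succ
    intro i
    rw [hnnS i]
    have := hp1 (J (i+1)) (nn i + 1)
    omega
  have hnnval : ∀ i, ε (J i) ≤ θ (nn i) ↑(Sd (nn i) (J i)) := by
    intro i
    cases i with
    | zero => rw [hnn0]; exact hp2 (J 0) 0
    | succ i => rw [hnnS i]; exact hp2 (J (i+1)) (nn i + 1)
  have hEex : ∀ i, ∃ Ei : Finset ℕ, Ei ⊆ Sd (nn i) (J i) ∧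
      τ (J i) ≤ θ (nn i) ↑Ei ∧ θ (nn i) ↑Ei < τ (J i) + δ (J i) := by
    intro i
    apply exists_mid (θ (nn i)) (hθmono (nn i)) (hθsub (nn i)) (hθempty (nn i))
      (δ (J i)) (τ (J i)) (hτpos (J i))
    · intro k hk
      exact (Finset.mem_filter.mp hk).2
    · exact le_trans (min_le_left _ _) (hnnval i)
  choose E hE1 hE2 hE3 using hEex
  have hEP : ∀ i, (↑(E i) : Set ℕ) ⊆ ↑(P (nn i)) := by
    intro i k hk
    exact Finset.mem_filter.mp (hE1 i hk) |>.1
  set Φ : (ℕ → Bool) → Set ℕ := fun f => {k | ∃ i, f i = true ∧ k ∈ E i} with hΦ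
  have hθΦ_true : ∀ (f : ℕ → Bool) (i : ℕ), f i = true →
      θ (nn i) (Φ f) = θ (nn i) ↑(E i) := by
    intro f i hfi
    have hset : Φ f ∩ ↑(P (nn i)) = ↑(E i) := by
      ext k
      constructor
      · rintro ⟨⟨i', hfi', hk'⟩, hkP⟩
        rcases eq_or_ne i' i with rfl | hne
        · exact hk'
        · exfalso
          have hne' : nn i' ≠ nn i := fun h => hne (hnnmono.injective h)
          exact Finset.disjoint_left.mp (hPdisj (nn i') (nn i) hne') (hEP i' hk') hkP
      · intro hk
        exact ⟨⟨i, hfi, hk⟩, hEP i hk⟩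
    rw [hθloc (nn i) (Φ f), hset]
  have hθΦ_zero : ∀ (f : ℕ → Bool) (m : ℕ), (∀ i, m = nn i → f i = false) →
      θ m (Φ f) = 0 := by
    intro f m hm
    have hset : Φ f ∩ ↑(P m) = ∅ := by
      ext k
      simp only [Set.mem_inter_iff, Set.mem_empty_iff_false, iff_false, not_and]
      rintro ⟨i, hfi, hk⟩ hkP
      have : m = nn i := by
        rw [hbl_unique k m hkP, hbl_unique k (nn i) (hEP i hk)]
      rw [hm i this] at hfi
      exact Bool.false_ne_true hfi
    rw [hθloc m (Φ f), hset, hθempty m]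
  have hiff : ∀ f : ℕ → Bool, (Φ f ∈ Z ↔ ∀ j, {i | f i = true ∧ J i = j}.Finite) := by
    intro f
    rw [hZ, Set.mem_setOf_eq]
    constructor
    · intro htt j
      by_contra hinf
      have hinf : {i | f i = true ∧ J i = j}.Infinite := hinf
      have hev : ∀ᶠ n in atTop, θ n (Φ f) < τ j := htt.eventually_lt_const (hτpos j)
      rw [eventually_atTop] at hev
      obtain ⟨N, hN⟩ := hev
      obtain ⟨i, hi_mem, hi_gt⟩ := hinf.exists_gt N
      have hni : N ≤ nn i := le_trans (le_of_lt hi_gt) (hnnmono.le_apply)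
      have h1 : θ (nn i) (Φ f) = θ (nn i) ↑(E i) := hθΦ_true f i hi_mem.1
      have h2 : τ (J i) ≤ θ (nn i) ↑(E i) := hE2 i
      rw [hi_mem.2] at h2
      have := hN (nn i) hni
      rw [h1] at this
      linarith
    · intro hfin
      rw [Metric.tendsto_atTop]
      intro εv hεv
      obtain ⟨j₀, hj₀⟩ := exists_nat_gt (2 / εv)
      have hj₀' : 2 * δ j₀ < εv := by
        have h1 : (0:ℝ) < (j₀ : ℝ) + 1 := by positivity
        have h4 : (0:ℝ) < ((j₀:ℝ) + 1)⁻¹ := by positivity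
        have h2 : 2 / εv < (j₀:ℝ) + 1 := by linarith
        rw [div_lt_iff₀ hεv] at h2
        show 2 * ((j₀:ℝ)+1)⁻¹ < εv
        calc 2 * ((j₀:ℝ)+1)⁻¹ < (((j₀:ℝ)+1) * εv) * ((j₀:ℝ)+1)⁻¹ :=
              mul_lt_mul_of_pos_right h2 h4
        _ = εv := by field_simp
      have hBfin : {i | f i = true ∧ J i < j₀}.Finite := by
        apply Set.Finite.subset (Set.Finite.biUnion (Set.finite_Iio j₀)
          (fun j _ => hfin j))
        rintro i ⟨h1, h2⟩
        exact Set.mem_biUnion h2 ⟨h1, rfl⟩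
      obtain ⟨Bd, hBd⟩ := (hBfin.image nn).bddAbove
      refine ⟨Bd + 1, fun m hm => ?_⟩
      rw [Real.dist_eq, sub_zero, abs_of_nonneg (hθnonneg m _)]
      by_cases hc : ∃ i, m = nn i ∧ f i = true
      · obtain ⟨i, rfl, hfi⟩ := hc
        rw [hθΦ_true f i hfi]
        have hJi : j₀ ≤ J i := by
          by_contra hJi
          push_neg at hJi
          have : nn i ≤ Bd := hBd (Set.mem_image_of_mem nn ⟨hfi, hJi⟩)
          omega
        have hδle : δ (J i) ≤ δ j₀ := by
          rw [hδ]
          apply inv_anti₀ (by positivity)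
          have : (j₀ : ℝ) ≤ (J i : ℝ) := Nat.cast_le.mpr hJi
          linarith
        have h3 := hE3 i
        have h4 : τ (J i) ≤ δ (J i) := min_le_right _ _
        linarith
      · push_neg at hc
        have : θ m (Φ f) = 0 := by
          apply hθΦ_zero
          intro i hmi
          by_contra hfi
          rw [Bool.not_eq_false] at hfi
          exact (hc i hmi) hfi
        rw [this]
        exact hεv
  set Ψ : (ℕ → Bool) → (ℕ → Bool) := fun f => chi (Φ f) with hΨ
  have hΨcont : Continuous Ψ := by
    apply continuous_pi
    intro m
    by_cases hm : ∃ i, m ∈ E i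
    · obtain ⟨i0, hi0⟩ := hm
      have huniq : ∀ i, m ∈ E i → i = i0 := by
        intro i hi
        by_contra hne
        have hne' : nn i ≠ nn i0 := fun h => hne (hnnmono.injective h)
        exact Finset.disjoint_left.mp (hPdisj (nn i) (nn i0) hne') (hEP i hi) (hEP i0 hi0)
      have heq : (fun f => Ψ f m) = fun f => f i0 := by
        ext f
        show chi (Φ f) m = f i0
        cases hf : f i0 with
        | true =>
          rw [chi_mem_iff'] 
          exact ⟨i0, hf, hi0⟩
        | false =>
          rw [chi_notMem_iff']
          rintro ⟨i, hfi, hi⟩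
          rw [huniq i hi] at hfi
          rw [hf] at hfi
          exact Bool.false_ne_true hfi
      rw [heq]
      exact continuous_apply i0
    · push_neg at hm
      have heq : (fun f => Ψ f m) = fun _ => false := by
        ext f
        show chi (Φ f) m = false
        rw [chi_notMem_iff']
        rintro ⟨i, _, hi⟩
        exact hm i hi
      rw [heq]
      exact continuous_const
  rintro ⟨C, hCcl, hCeq⟩
  apply not_fsigma_colFin J (fun j => unpair_fiber_infinite j)
  refine ⟨fun k => Ψ ⁻¹' (C k), fun k => (hCcl k).preimage hΨcont, ?_⟩
  ext f
  simp only [Set.mem_setOf_eq, Set.mem_iUnion, Set.mem_preimage]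
  rw [← hiff f]
  constructor
  · intro hmem
    have : Ψ f ∈ chi '' Z := ⟨Φ f, hmem, rfl⟩
    rw [hCeq] at this
    exact Set.mem_iUnion.mp this
  · intro ⟨k, hk⟩
    have : Ψ f ∈ chi '' Z := by
      rw [hCeq]
      exact Set.mem_iUnion.mpr ⟨k, hk⟩
    obtain ⟨A, hA, hchiA⟩ := this
    rwa [chi_inj hchiA] at hA
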